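/- arXiv:2005.09918 — 5 statements merged into one kernel-verified Lean document; each statement's English description precedes it below -/
import Mathlib

section
/- The coefficients V^gamma_{N,k} := sum_{K=k}^infinity p(K) * K!/((K-k)!) * Gamma(gamma K)/Gamma(gamma K + N) satisfy the recursion V^gamma_{N,k} = (N + gamma k) V^gamma_{N+1,k} + gamma * V^gamma_{N+1,k+1} for all N >= 1 and 1 <= k <= N. -/
/-- The coefficients `V^γ_{N,k} = ∑_{K≥k} p(K) K!/(K-k)! Γ(γK)/Γ(γK+N)`
satisfy the recursion `V^γ_{N,k} = (N + γk) V^γ_{N+1,k} + γ V^γ_{N+1,k+1}`. -/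
theorem V_recursion (γ : ℝ) (hγ : 0 < γ) (p : ℕ → ℝ) (hp : ∀ K, 0 ≤ p K) (hp0 : p 0 = 0)
    (hps : ∑' K : ℕ, p K = 1)
    (V : ℕ → ℕ → ℝ)
    (hV : ∀ N k, V N k = ∑' K : ℕ,
      if k ≤ K then
        p K * ((Nat.factorial K : ℝ) / (Nat.factorial (K - k) : ℝ)) *
          (Real.Gamma (γ * K) / Real.Gamma (γ * K + N))
      else 0)
    (hsum : ∀ N k, Summable fun K : ℕ =>
      if k ≤ K then
        p K * ((Nat.factorial K : ℝ) / (Nat.factorial (K - k) : ℝ)) *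
          (Real.Gamma (γ * K) / Real.Gamma (γ * K + N))
      else 0)
    (N k : ℕ) (hN : 1 ≤ N) (hk : 1 ≤ k) (hkN : k ≤ N) :
    V N k = ((N : ℝ) + γ * k) * V (N + 1) k + γ * V (N + 1) (k + 1) := by
  rw [hV N k, hV (N + 1) k, hV (N + 1) (k + 1)]
  push_cast
  rw [← tsum_mul_left, ← tsum_mul_left,
    ← Summable.tsum_add (((hsum ((N:ℝ) + 1) k).mul_left _)) (((hsum ((N:ℝ) + 1) (k + 1)).mul_left _))]
  refine tsum_congr fun K => ?_
  by_cases hK : k ≤ K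
  · have hApos : (0:ℝ) < γ * K + N := by
      have : (1:ℝ) ≤ (N:ℝ) := by exact_mod_cast hN
      have : (0:ℝ) ≤ γ * K := by positivity
      linarith
    have hA : (γ * K + N : ℝ) ≠ 0 := ne_of_gt hApos
    have hGpos : 0 < Real.Gamma (γ * K + N) := Real.Gamma_pos_of_pos hApos
    have hG : Real.Gamma (γ * K + N) ≠ 0 := ne_of_gt hGpos
    have hrec : Real.Gamma (γ * K + ((N:ℝ) + 1)) = (γ * K + N) * Real.Gamma (γ * K + N) := by
      rw [show γ * K + ((N:ℝ) + 1) = (γ * K + N) + 1 by ring, Real.Gamma_add_one hA]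
    have hfK : (Nat.factorial K : ℝ) ≠ 0 := Nat.cast_ne_zero.mpr (Nat.factorial_ne_zero K)
    have hfk : (Nat.factorial (K - k) : ℝ) ≠ 0 := Nat.cast_ne_zero.mpr (Nat.factorial_ne_zero _)
    by_cases hK1 : k + 1 ≤ K
    · rw [if_pos hK, if_pos hK, if_pos hK1, hrec]
      have hfk1 : (Nat.factorial (K - (k + 1)) : ℝ) ≠ 0 :=
        Nat.cast_ne_zero.mpr (Nat.factorial_ne_zero _)
      have hfact : (Nat.factorial (K - k) : ℝ) =
          ((K : ℝ) - k) * (Nat.factorial (K - (k + 1)) : ℝ) := by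
        have h1 : K - k = (K - (k + 1)) + 1 := by omega
        have h2 : ((K - (k + 1) + 1 : ℕ) : ℝ) = (K : ℝ) - k := by
          have h3 : K - (k + 1) + 1 = K - k := by omega
          rw [h3, Nat.cast_sub hK]
        rw [h1, Nat.factorial_succ, Nat.cast_mul, h2]
      field_simp
      rw [hfact]
      ring
    · have hKk : K = k := by omega
      subst hKk
      rw [if_pos hK, if_pos hK, if_neg hK1, hrec]
      field_simp
      ring
  · rw [if_neg hK, if_neg hK, if_neg (by omega)]
    ring
end

section
/- For a dynamic mixture of finite mixtures with gamma_K = alpha/K, the exchangeable partition probability function factorizes as p(C | N, alpha) = p_DP(C | N, alpha) * sum_{K = K_+}^infinity p(K) * R_{N,K_+}^{K,alpha}, where p_DP(C | N, alpha) = alpha^{K_+} Gamma(alpha)/Gamma(alpha + N) * prod_{j=1}^{K_+} Gamma(N_j) is the Ewens distribution and R_{N,K_+}^{K,alpha} = prod_{j=1}^{K_+} [Gamma(N_j + alpha/K) (K - j + 1)] / [Gamma(1 + alpha/K) Gamma(N_j) K]. -/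
open Finset

/-! With `γ_K = α / K` we have `γ_K K = α`, so the `K`-dependence of the prior weight
`V_{N,K_+}^{K,γ_K}` is only `K! / (K - K_+)! = ∏_{j < K_+} (K - j)`, while
`Γ(1 + α/K) K = α Γ(α/K)`. Distributing these factors over the `K_+` blocks and pulling out
`α^{K_+} Γ(α) / Γ(α + N) ∏_j Γ(N_j)` turns each summand of the EPPF into the Ewens weight times
`p(K) R_{N,K_+}^{K,α}`; the two series then agree termwise. -/

theorem prod_fin_natCast_sub_eq_descFactorial {R : Type*} [CommRing R] (K n : ℕ) :
    ∏ j : Fin n, ((K : R) - j) = K.descFactorial n := by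
  rw [Fin.prod_univ_eq_prod_range (fun j => (K : R) - j), ← descPochhammer_eval_eq_prod_range,
    descPochhammer_eval_eq_descFactorial]

theorem prod_mul_natCast_sub_div_eq {F : Type*} [Field F] {n : ℕ} (K : ℕ) (c : F)
    (a b : Fin n → F) :
    ∏ j : Fin n, a j * ((K : F) - j) / (c * b j)
      = (∏ j, a j) * K.descFactorial n / (c ^ n * ∏ j, b j) := by
  rw [prod_div_distrib, prod_mul_distrib, prod_mul_distrib, prod_const, card_univ,
    Fintype.card_fin, prod_fin_natCast_sub_eq_descFactorial]

theorem Real.Gamma_one_add_div_mul {α K : ℝ} (hα : α ≠ 0) (hK : K ≠ 0) :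
    Real.Gamma (1 + α / K) * K = α * Real.Gamma (α / K) := by
  rw [add_comm, Real.Gamma_add_one (div_ne_zero hα hK), mul_right_comm, div_mul_cancel₀ α hK]

theorem dynamicMFM_summand_eq_ewens_mul {N Kp K : ℕ} (hK : 0 < K) (hKpK : Kp ≤ K)
    {α : ℝ} (hα : 0 < α) (Nj : Fin Kp → ℕ) (hNj : ∀ j, 0 < Nj j) (q : ℝ) :
    q * ((Real.Gamma ((α / K) * K) * (K.factorial : ℝ)) /
          (Real.Gamma ((α / K) * K + N) * ((K - Kp).factorial : ℝ))) /
        (Real.Gamma (α / K)) ^ Kp * ∏ j, Real.Gamma ((Nj j : ℝ) + α / K)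
      = (α ^ Kp * Real.Gamma α / Real.Gamma (α + N) * ∏ j, Real.Gamma (Nj j)) *
          (q * ∏ j : Fin Kp,
            (Real.Gamma ((Nj j : ℝ) + α / K) * ((K : ℝ) - j)) /
              (Real.Gamma (1 + α / K) * Real.Gamma (Nj j) * K)) := by
  have hK0 : (K : ℝ) ≠ 0 := by positivity
  have hΓαK : Real.Gamma (α / K) ≠ 0 := (Real.Gamma_pos_of_pos (by positivity)).ne'
  have hΓαN : Real.Gamma (α + N) ≠ 0 := (Real.Gamma_pos_of_pos (by positivity)).ne'
  have hΓNj : ∏ j, Real.Gamma (Nj j) ≠ 0 :=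
    prod_ne_zero_iff.mpr fun j _ => (Real.Gamma_pos_of_pos (by exact_mod_cast hNj j)).ne'
  have hdenom : ∀ j : Fin Kp, Real.Gamma (1 + α / K) * Real.Gamma (Nj j) * K
      = α * Real.Gamma (α / K) * Real.Gamma (Nj j) := fun j => by
    rw [mul_right_comm, Real.Gamma_one_add_div_mul hα.ne' hK0]
  simp_rw [hdenom, prod_mul_natCast_sub_div_eq, div_mul_cancel₀ α hK0,
    ← Nat.factorial_mul_descFactorial hKpK, Nat.cast_mul]
  have hfac : ((K - Kp).factorial : ℝ) ≠ 0 := by positivity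
  field_simp
  ring

theorem dynamic_MFM_EPPF_factorization_general (N Kp : ℕ) (hKp : 0 < Kp) (α : ℝ) (hα : 0 < α)
    (Nj : Fin Kp → ℕ) (hNj : ∀ j, 0 < Nj j)
    (p : ℕ → ℝ) :
    (∑' K : ℕ, if Kp ≤ K then
        p K * ((Real.Gamma ((α / K) * K) * (Nat.factorial K : ℝ)) /
            (Real.Gamma ((α / K) * K + N) * (Nat.factorial (K - Kp) : ℝ))) /
          (Real.Gamma (α / K)) ^ Kp * ∏ j, Real.Gamma ((Nj j : ℝ) + α / K)
      else 0)
    = (α ^ Kp * Real.Gamma α / Real.Gamma (α + N) * ∏ j, Real.Gamma (Nj j)) *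
        (∑' K : ℕ, if Kp ≤ K then
            p K * ∏ j : Fin Kp,
              (Real.Gamma ((Nj j : ℝ) + α / K) * ((K : ℝ) - j)) /
                (Real.Gamma (1 + α / K) * Real.Gamma (Nj j) * K)
          else 0) := by
  rw [← tsum_mul_left]
  refine tsum_congr fun K => ?_
  split_ifs with hKpK
  · exact dynamicMFM_summand_eq_ewens_mul (hKp.trans_le hKpK) hKpK hα Nj hNj (p K)
  · rw [mul_zero]

/-- For a dynamic MFM with `γ_K = α/K`, the EPPF factorizes as the Ewens
distribution times `∑_{K ≥ K_+} p(K) R_{N,K_+}^{K,α}`. -/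
theorem dynamic_MFM_EPPF_factorization (N Kp : ℕ) (hKp : 0 < Kp) (α : ℝ) (hα : 0 < α)
    (Nj : Fin Kp → ℕ) (hNj : ∀ j, 0 < Nj j) (hsum : ∑ j, Nj j = N)
    (p : ℕ → ℝ) (hp : ∀ K, 0 ≤ p K) (hp0 : p 0 = 0) (hps : ∑' K : ℕ, p K = 1) :
    (∑' K : ℕ, if Kp ≤ K then
        p K * ((Real.Gamma ((α / K) * K) * (Nat.factorial K : ℝ)) /
            (Real.Gamma ((α / K) * K + N) * (Nat.factorial (K - Kp) : ℝ))) /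
          (Real.Gamma (α / K)) ^ Kp * ∏ j, Real.Gamma ((Nj j : ℝ) + α / K)
      else 0)
    = (α ^ Kp * Real.Gamma α / Real.Gamma (α + N) * ∏ j, Real.Gamma (Nj j)) *
        (∑' K : ℕ, if Kp ≤ K then
            p K * ∏ j : Fin Kp,
              (Real.Gamma ((Nj j : ℝ) + α / K) * ((K : ℝ) - j)) /
                (Real.Gamma (1 + α / K) * Real.Gamma (Nj j) * K)
          else 0) :=
  dynamic_MFM_EPPF_factorization_general N Kp hKp α hα Nj hNj p
end

section
/- For a finite mixture with K components and symmetric Dirichlet(gamma) weights, the prior probability that exactly k components are nonempty given N observations is P(K_+ = k | N, K, gamma) = N!/k! * K!/(K-k)! * Gamma(gamma K)/(Gamma(gamma K + N) Gamma(gamma)^k) * C^gamma_{N,k}, where C^gamma_{N,k} = sum over compositions (N_1,...,N_k) of N into k positive parts of prod_{j=1}^k Gamma(N_j + gamma)/Gamma(N_j + 1). -/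
/-!
Group the allocations by their set of occupied labels. There are `K.choose k` such sets of size
`k`, and each contributes the same sum over the surjections onto `Fin k`, because an empty
component contributes the factor `Γ(0 + γ) / Γ(γ) = 1`. Grouping the surjections in turn by
their occupation numbers, a composition `(N_1, …, N_k)` of `N`, each composition is realised by
`N! / ∏ N_j!` allocations (orbit–stabilizer for the permutations of the observations), and
`Γ(N_j + 1) = N_j!` turns the result into `N! / Γ(γ)^k · C^γ_{N,k}`.
-/

open Finset

/-- `C^γ_{N,k}`: sum over compositions of `N` into `k` positive parts of
`∏_j Γ(N_j + γ)/Γ(N_j + 1)`. -/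
noncomputable def compSum (γ : ℝ) (N k : ℕ) : ℝ :=
  ∑ f ∈ (Finset.Nat.antidiagonalTuple k N).filter (fun f => ∀ j, 0 < f j),
    ∏ j, Real.Gamma ((f j : ℝ) + γ) / Real.Gamma ((f j : ℝ) + 1)

open Equiv MulAction
open scoped Nat

section
variable {α ι : Type*} [Fintype α] [DecidableEq ι]

def fiberCard (S : α → ι) (j : ι) : ℕ := #{a | S a = j}

lemma fiberCard_eq_card_subtype (S : α → ι) (j : ι) :
    fiberCard S j = Fintype.card {a // S a = j} :=
  (Fintype.card_subtype _).symm

lemma fiberCard_comp_equiv {β : Type*} [Fintype β] (S : α → ι) (σ : β ≃ α) :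
    fiberCard (S ∘ σ) = fiberCard S :=
  funext fun j => by
    simp only [fiberCard_eq_card_subtype]
    exact Fintype.card_congr (σ.subtypeEquiv fun _ => Iff.rfl)

lemma exists_perm_comp_eq_of_fiberCard_eq {S T : α → ι} (h : fiberCard S = fiberCard T) :
    ∃ σ : Perm α, T ∘ σ = S :=
  have e j : {a // S a = j} ≃ {a // T a = j} :=
    Fintype.equivOfCardEq (by rw [← fiberCard_eq_card_subtype, ← fiberCard_eq_card_subtype, h])
  ⟨ofFiberEquiv e, funext (ofFiberEquiv_map e)⟩

lemma sum_fiberCard [Fintype ι] (S : α → ι) : ∑ j, fiberCard S j = Fintype.card α :=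
  (card_eq_sum_card_fiberwise fun a _ => mem_univ (S a)).symm

lemma exists_fiberCard_eq [Fintype ι] (n : ι → ℕ) (hn : ∑ j, n j = Fintype.card α) :
    ∃ T : α → ι, fiberCard T = n := by
  obtain ⟨e⟩ : Nonempty ((Σ j, Fin (n j)) ≃ α) :=
    Fintype.card_eq.mp (by simp [hn])
  refine ⟨Sigma.fst ∘ e.symm, ?_⟩
  rw [fiberCard_comp_equiv]
  funext j
  rw [fiberCard_eq_card_subtype, Fintype.card_congr (Equiv.sigmaSubtype j), Fintype.card_fin]

lemma orbit_domMulAct_eq_setOf_fiberCard_eq (T : α → ι) :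
    orbit (Perm α)ᵈᵐᵃ T = {S | fiberCard S = fiberCard T} := by
  ext S
  simp only [mem_orbit_iff, Set.mem_ofPred_eq]
  constructor
  · rintro ⟨g, rfl⟩
    exact fiberCard_comp_equiv T (DomMulAct.mk.symm g)
  · intro h
    obtain ⟨σ, hσ⟩ := exists_perm_comp_eq_of_fiberCard_eq h
    exact ⟨DomMulAct.mk σ, by ext a; simp [DomMulAct.smul_apply, ← hσ]⟩

theorem card_fiberCard_eq_mul_prod_factorial [Fintype ι] [DecidableEq α] (n : ι → ℕ)
    (hn : ∑ j, n j = Fintype.card α) :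
    #{S : α → ι | fiberCard S = n} * ∏ j, (n j)! = (Fintype.card α)! := by
  obtain ⟨T, rfl⟩ := exists_fiberCard_eq n hn
  have hstab : Nat.card (stabilizer (Perm α)ᵈᵐᵃ T) = ∏ j, (fiberCard T j)! := by
    rw [Nat.card_congr ((subtypeEquiv DomMulAct.mk.symm fun _ => DomMulAct.mem_stabilizer_iff :
        stabilizer (Perm α)ᵈᵐᵃ T ≃ {g : Perm α // T ∘ g = T})),
      Nat.card_eq_fintype_card, DomMulAct.stabilizer_card]
    simp only [fiberCard_eq_card_subtype]
  have horbit :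
      #{S : α → ι | fiberCard S = fiberCard T} = (orbit (Perm α)ᵈᵐᵃ T).ncard := by
    rw [orbit_domMulAct_eq_setOf_fiberCard_eq, ← Set.ncard_coe_finset]
    simp
  rw [horbit, ← index_stabilizer, ← hstab, mul_comm, Subgroup.card_mul_index,
    Nat.card_congr DomMulAct.mk.symm, Nat.card_eq_fintype_card, Fintype.card_perm]

lemma surjective_iff_forall_fiberCard_pos (S : α → ι) :
    Function.Surjective S ↔ ∀ j, 0 < fiberCard S j := by
  simp only [fiberCard, card_pos, filter_nonempty_iff, mem_univ, true_and]
  rfl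

lemma fiberCard_comp_apply_of_injective {κ : Type*} [DecidableEq κ] {e : ι → κ}
    (he : e.Injective) (S : α → ι) (j : ι) : fiberCard (e ∘ S) (e j) = fiberCard S j := by
  simp only [fiberCard, Function.comp_apply, he.eq_iff]

lemma prod_fiberCard_comp_embedding {κ M : Type*} [Fintype ι] [Fintype κ] [DecidableEq κ]
    [CommMonoid M] {g : ℕ → M} (hg : g 0 = 1) (e : ι ↪ κ) (S : α → ι) :
    ∏ l, g (fiberCard (e ∘ S) l) = ∏ j, g (fiberCard S j) := by
  have hoff : ∀ l ∈ univ, l ∉ univ.map e → g (fiberCard (e ∘ S) l) = 1 := by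
    intro l _ hl
    suffices fiberCard (e ∘ S) l = 0 by rw [this, hg]
    simp only [fiberCard, card_eq_zero, filter_eq_empty_iff, Function.comp_apply]
    exact fun a _ h => hl (h ▸ mem_map_of_mem e (mem_univ (S a)))
  rw [← prod_subset (subset_univ _) hoff, prod_map]
  exact prod_congr rfl fun j _ => congrArg g (fiberCard_comp_apply_of_injective e.injective S j)

end

lemma Finset.exists_embedding_fin_map_univ {ι : Type*} (T : Finset ι) :
    ∃ e : Fin #T ↪ ι, univ.map e = T :=
  ⟨T.equivFin.symm.toEmbedding.trans (.subtype _), by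
    rw [← map_map, map_univ_equiv, univ_eq_attach, attach_map_val]⟩

section
variable {α ι κ M : Type*} [Fintype α] [DecidableEq α] [Fintype ι] [DecidableEq ι]
  [Fintype κ] [DecidableEq κ]

lemma sum_surjective_comp_embedding [AddCommMonoid M] (e : κ ↪ ι) (F : (α → ι) → M) :
    ∑ S : α → κ with S.Surjective, F (e ∘ S)
      = ∑ S : α → ι with univ.image S = univ.map e, F S := by
  refine sum_nbij (e ∘ ·) (fun S hS => ?_) (fun S _ S' _ h => e.injective.comp_left h)
    (fun S hS => ?_) fun _ _ => rfl
  · simp only [mem_filter, mem_univ, true_and] at hS ⊢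
    rw [← image_image, image_univ_of_surjective hS, map_eq_image]
  · simp only [coe_filter, mem_univ, true_and, Set.mem_ofPred_eq] at hS
    have hmem a : S a ∈ univ.map e := hS ▸ mem_image_of_mem S (mem_univ a)
    choose S' hS' using fun a => mem_map.mp (hmem a)
    refine ⟨S', ?_, funext fun a => (hS' a).2⟩
    simp only [coe_filter, mem_univ, true_and, Set.mem_ofPred_eq]
    intro j
    obtain ⟨a, -, ha⟩ := mem_image.mp (hS.symm ▸ mem_map_of_mem e (mem_univ j))
    exact ⟨a, e.injective ((hS' a).2.trans ha)⟩

variable [CommSemiring M] {g : ℕ → M}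

lemma sum_image_eq_eq_sum_surjective (hg : g 0 = 1) {k : ℕ} (T : Finset ι) (hT : #T = k) :
    ∑ S : α → ι with univ.image S = T, ∏ l, g (fiberCard S l)
      = ∑ S : α → Fin k with S.Surjective, ∏ j, g (fiberCard S j) := by
  subst hT
  obtain ⟨e, he⟩ := T.exists_embedding_fin_map_univ
  calc _ = ∑ S : α → ι with univ.image S = univ.map e, ∏ l, g (fiberCard S l) := by rw [he]
    _ = _ := by
      rw [← sum_surjective_comp_embedding]
      exact sum_congr rfl fun S _ => prod_fiberCard_comp_embedding hg e S

theorem sum_card_image_eq_choose_mul (hg : g 0 = 1) (k : ℕ) :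
    ∑ S : α → ι with #(univ.image S) = k, ∏ l, g (fiberCard S l)
      = (Fintype.card ι).choose k *
          ∑ S : α → Fin k with S.Surjective, ∏ j, g (fiberCard S j) := by
  have hmaps : ∀ S ∈ ({S : α → ι | #(univ.image S) = k} : Finset _),
      univ.image S ∈ powersetCard k univ := fun S hS =>
    mem_powersetCard.mpr ⟨subset_univ _, (mem_filter.mp hS).2⟩
  rw [← sum_fiberwise_of_maps_to hmaps, ← card_univ, ← card_powersetCard, ← nsmul_eq_mul,
    ← sum_const]
  refine sum_congr rfl fun T hT => ?_
  have hTk := (mem_powersetCard.mp hT).2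
  rw [filter_filter, ← sum_image_eq_eq_sum_surjective hg T hTk]
  refine sum_congr (filter_congr fun S _ => ?_) fun _ _ => rfl
  exact ⟨fun h => h.2, fun h => ⟨h ▸ hTk, h⟩⟩

end

def compositions (k N : ℕ) : Finset (Fin k → ℕ) :=
  {f ∈ Nat.antidiagonalTuple k N | ∀ j, 0 < f j}

lemma mem_compositions {k N : ℕ} {f : Fin k → ℕ} :
    f ∈ compositions k N ↔ ∑ j, f j = N ∧ ∀ j, 0 < f j := by
  rw [compositions, mem_filter, Nat.mem_antidiagonalTuple]

theorem sum_surjective_eq_sum_compositions {α M : Type*} [Fintype α] [DecidableEq α]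
    [AddCommMonoid M] (k : ℕ) (F : (Fin k → ℕ) → M) :
    ∑ S : α → Fin k with S.Surjective, F (fiberCard S)
      = ∑ f ∈ compositions k (Fintype.card α),
          #{S : α → Fin k | fiberCard S = f} • F f := by
  have hmaps : ∀ S ∈ ({S : α → Fin k | S.Surjective} : Finset _),
      fiberCard S ∈ compositions k (Fintype.card α) := fun S hS =>
    mem_compositions.mpr ⟨sum_fiberCard S,
      (surjective_iff_forall_fiberCard_pos S).mp (mem_filter.mp hS).2⟩
  rw [← sum_fiberwise_of_maps_to hmaps]
  refine sum_congr rfl fun f hf => ?_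
  rw [filter_filter, ← sum_const]
  refine sum_congr (filter_congr fun S _ => ⟨fun h => h.2, fun h => ⟨?_, h⟩⟩) fun S hS => ?_
  · exact (surjective_iff_forall_fiberCard_pos S).mpr (h ▸ (mem_compositions.mp hf).2)
  · rw [(mem_filter.mp hS).2]

lemma card_fiberCard_eq_smul_prod_Gamma {N k : ℕ} (γ : ℝ) (f : Fin k → ℕ)
    (hf : ∑ j, f j = N) :
    #{S : Fin N → Fin k | fiberCard S = f} • ∏ j, Real.Gamma (f j + γ) / Real.Gamma γ
      = N ! / Real.Gamma γ ^ k * ∏ j, Real.Gamma (f j + γ) / Real.Gamma (f j + 1) := by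
  have hcount := card_fiberCard_eq_mul_prod_factorial (α := Fin N) f (by simpa using hf)
  rw [Fintype.card_fin] at hcount
  have hprod : (∏ j, (f j)! : ℝ) ≠ 0 := by positivity
  have hcountR : (#{S : Fin N → Fin k | fiberCard S = f} : ℝ) = N ! / ∏ j, ((f j)! : ℝ) :=
    eq_div_of_mul_eq hprod (by exact_mod_cast hcount)
  rw [nsmul_eq_mul, hcountR]
  simp only [Real.Gamma_nat_eq_factorial, prod_div_distrib, prod_const, card_univ,
    Fintype.card_fin]
  ring

theorem prior_number_of_clusters_general (N K k : ℕ) (γ : ℝ) (hγ : 0 < γ) (hkK : k ≤ K) :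
    (∑ S ∈ (Finset.univ : Finset (Fin N → Fin K)).filter
        (fun S => (Finset.univ.filter (fun l : Fin K => ∃ i, S i = l)).card = k),
      Real.Gamma (γ * K) / Real.Gamma (γ * K + N) *
        ∏ l : Fin K,
          Real.Gamma (((Finset.univ.filter (fun i => S i = l)).card : ℝ) + γ) / Real.Gamma γ)
    = (Nat.factorial N : ℝ) / (Nat.factorial k : ℝ) *
        ((Nat.factorial K : ℝ) / (Nat.factorial (K - k) : ℝ)) *
        (Real.Gamma (γ * K) / (Real.Gamma (γ * K + N) * (Real.Gamma γ) ^ k)) *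
        compSum γ N k := by
  have hg : Real.Gamma (((0 : ℕ) : ℝ) + γ) / Real.Gamma γ = 1 := by
    simp [(Real.Gamma_pos_of_pos hγ).ne']
  simp only [univ_filter_exists, ← fiberCard.eq_1]
  rw [← mul_sum,
    sum_card_image_eq_choose_mul (g := fun n : ℕ => Real.Gamma (n + γ) / Real.Gamma γ) hg k,
    sum_surjective_eq_sum_compositions k fun f => ∏ j, Real.Gamma (f j + γ) / Real.Gamma γ]
  have hcomp : compSum γ N k = ∑ f ∈ compositions k N,
      ∏ j, Real.Gamma (f j + γ) / Real.Gamma (f j + 1) := rfl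
  rw [Fintype.card_fin, Fintype.card_fin, sum_congr rfl fun f hf =>
      card_fiberCard_eq_smul_prod_Gamma γ f (mem_compositions.mp hf).1,
    ← mul_sum, ← hcomp, Nat.cast_choose ℝ hkK]
  ring

/-- For a finite mixture with `K` components and symmetric Dirichlet(γ)
weights, summing the marginal allocation probability over all allocation vectors with
exactly `k` nonempty components yields
`N!/k! · K!/(K-k)! · Γ(γK)/(Γ(γK+N) Γ(γ)^k) · C^γ_{N,k}`. -/
theorem prior_number_of_clusters (N K k : ℕ) (γ : ℝ) (hγ : 0 < γ)
    (hk : 1 ≤ k) (hkK : k ≤ K) (hkN : k ≤ N) :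
    (∑ S ∈ (Finset.univ : Finset (Fin N → Fin K)).filter
        (fun S => (Finset.univ.filter (fun l : Fin K => ∃ i, S i = l)).card = k),
      Real.Gamma (γ * K) / Real.Gamma (γ * K + N) *
        ∏ l : Fin K,
          Real.Gamma (((Finset.univ.filter (fun i => S i = l)).card : ℝ) + γ) / Real.Gamma γ)
    = (Nat.factorial N : ℝ) / (Nat.factorial k : ℝ) *
        ((Nat.factorial K : ℝ) / (Nat.factorial (K - k) : ℝ)) *
        (Real.Gamma (γ * K) / (Real.Gamma (γ * K + N) * (Real.Gamma γ) ^ k)) *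
        compSum γ N k :=
  prior_number_of_clusters_general N K k γ hγ hkK
end

section
/- For a dynamic MFM with gamma_K = alpha/K, the predictive probability that a new observation creates a new cluster satisfies P(y_{N+1} in C_{k+1} | N, K_+ = k, alpha) = alpha/(alpha + N) * [1 - k * (sum_{K>=k} p(K)/K * R_{N,k}^{K,alpha}) / (sum_{K>=k} p(K) * R_{N,k}^{K,alpha})], and in particular this probability is bounded above by alpha/(alpha + N). -/
/-!
Both EPPFs factor as an Ewens part times a series `∑_{K ≥ K₊} p(K) R^K`. The Ewens parts contribute
the factor `α / (α + N)`. Adding a singleton block multiplies `R^K` by `(K - k) / K = 1 - k / K`,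
so the new series is `∑_{K ≥ k} p(K) R^K - k ∑_{K ≥ k} p(K) R^K / K` (the term `K = k` vanishes).
Since the subtracted series is nonnegative, the bracket is at most `1`.
-/

open Finset

/-- The correction factor `R_{N,k}^{K,α}` of a partition with block sizes `n`. -/
noncomputable def mfmCorrection {k : ℕ} (α : ℝ) (n : Fin k → ℕ) (K : ℕ) : ℝ :=
  ∏ j : Fin k, Real.Gamma ((n j : ℝ) + α / K) * ((K : ℝ) - j) /
    (Real.Gamma (1 + α / K) * Real.Gamma (n j) * K)

theorem mfmCorrection_snoc_one {k : ℕ} {α : ℝ} (hα : 0 ≤ α) (n : Fin k → ℕ) (K : ℕ) :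
    mfmCorrection α (Fin.snoc n 1 : Fin (k + 1) → ℕ) K
      = mfmCorrection α n K * (((K : ℝ) - k) / K) := by
  have hΓ : Real.Gamma (1 + α / K) ≠ 0 :=
    (Real.Gamma_pos_of_pos (by positivity)).ne'
  simp only [mfmCorrection, Fin.prod_univ_castSucc, Fin.snoc_castSucc, Fin.val_castSucc,
    Fin.snoc_last, Fin.val_last, Nat.cast_one, Real.Gamma_one, mul_one, mul_div_mul_left _ _ hΓ]

theorem mfmCorrection_nonneg {k K : ℕ} {α : ℝ} (hα : 0 ≤ α) (n : Fin k → ℕ) (hkK : k ≤ K) :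
    0 ≤ mfmCorrection α n K :=
  prod_nonneg fun j _ => by
    have hj : ((j : ℕ) : ℝ) ≤ K := by exact_mod_cast (j.isLt.trans_le hkK).le
    have hΓ {s : ℝ} (hs : 0 ≤ s) : 0 ≤ Real.Gamma s := Real.Gamma_nonneg_of_nonneg hs
    exact div_nonneg (mul_nonneg (hΓ (by positivity)) (sub_nonneg.2 hj))
      (mul_nonneg (mul_nonneg (hΓ (by positivity)) (hΓ (by positivity))) K.cast_nonneg)

theorem ite_succ_le_mul_sub_div {k : ℕ} (hk : k ≠ 0) (p R : ℕ → ℝ) (K : ℕ) :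
    (if k + 1 ≤ K then p K * (R K * (((K : ℝ) - k) / K)) else 0)
      = (if k ≤ K then p K * R K else 0) - k * (if k ≤ K then p K / K * R K else 0) := by
  rcases lt_trichotomy K k with hK | rfl | hK
  · simp [show ¬ k ≤ K by omega, show ¬ k + 1 ≤ K by omega]
  · have : (K : ℝ) ≠ 0 := by exact_mod_cast hk
    simp [field]
  · have : (K : ℝ) ≠ 0 := by exact_mod_cast (hk.bot_lt.trans hK).ne'
    simp only [show k ≤ K by omega, show k + 1 ≤ K by omega, if_true]
    field_simp

theorem tsum_ite_succ_le_mul_sub_div {k : ℕ} (hk : k ≠ 0) {p R : ℕ → ℝ}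
    (h₁ : Summable fun K : ℕ => if k ≤ K then p K * R K else 0)
    (h₂ : Summable fun K : ℕ => if k ≤ K then p K / K * R K else 0) :
    (∑' K : ℕ, if k + 1 ≤ K then p K * (R K * (((K : ℝ) - k) / K)) else 0)
      = (∑' K : ℕ, if k ≤ K then p K * R K else 0)
        - k * ∑' K : ℕ, if k ≤ K then p K / K * R K else 0 := by
  simp only [ite_succ_le_mul_sub_div hk]
  rw [h₁.tsum_sub (h₂.mul_left _), tsum_mul_left]

/-- Ratio of the Ewens prefactors `α^k Γ(α) / Γ(α + N) ∏ Γ(N_j)` after adding a singleton block. -/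
theorem ewens_singleton_ratio (k : ℕ) {α N P : ℝ} (hα : 0 < α) (hN : 0 ≤ N) (hP : P ≠ 0) :
    (α ^ (k + 1) * Real.Gamma α / Real.Gamma (α + (N + 1)) * (P * Real.Gamma 1)) /
      (α ^ k * Real.Gamma α / Real.Gamma (α + N) * P) = α / (α + N) := by
  have hαN : 0 < α + N := by positivity
  have hΓα := (Real.Gamma_pos_of_pos hα).ne'
  have hΓαN := (Real.Gamma_pos_of_pos hαN).ne'
  rw [← add_assoc, Real.Gamma_add_one hαN.ne', Real.Gamma_one, pow_succ]
  field_simp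

theorem dynamic_MFM_predictive_general (N k : ℕ) (hk : 0 < k) (α : ℝ) (hα : 0 < α)
    (Nj : Fin k → ℕ) (hNj : ∀ j, 0 < Nj j)
    (p : ℕ → ℝ) (hp : ∀ K, 0 ≤ p K)
    -- the correction factor `R_{N,k}^{K,α}` of the current partition
    (R : ℕ → ℝ)
    (hR : ∀ K, R K = ∏ j : Fin k,
        (Real.Gamma ((Nj j : ℝ) + α / K) * ((K : ℝ) - j)) /
          (Real.Gamma (1 + α / K) * Real.Gamma (Nj j) * K))
    -- the correction factor of the partition with the extra singleton cluster
    (Rnew : ℕ → ℝ)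
    (hRnew : ∀ K, Rnew K = ∏ j : Fin (k + 1),
        (Real.Gamma (((Fin.snoc Nj 1 : Fin (k + 1) → ℕ) j : ℝ) + α / K) * ((K : ℝ) - j)) /
          (Real.Gamma (1 + α / K) * Real.Gamma ((Fin.snoc Nj 1 : Fin (k + 1) → ℕ) j) * K))
    -- summability of the relevant series
    (hs1 : Summable fun K : ℕ => if k ≤ K then p K * R K else 0)
    (hs2 : Summable fun K : ℕ => if k ≤ K then p K / K * R K else 0)
    (hpos : 0 < ∑' K : ℕ, if k ≤ K then p K * R K else 0)
    -- the predictive probability, defined as the ratio `p(C^new|N+1,α)/p(C|N,α)` of EPPFs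
    (pred : ℝ)
    (hpred : pred =
      ((α ^ (k + 1) * Real.Gamma α / Real.Gamma (α + (N + 1)) *
          ((∏ j, Real.Gamma (Nj j)) * Real.Gamma 1)) *
        (∑' K : ℕ, if k + 1 ≤ K then p K * Rnew K else 0)) /
      ((α ^ k * Real.Gamma α / Real.Gamma (α + N) * ∏ j, Real.Gamma (Nj j)) *
        (∑' K : ℕ, if k ≤ K then p K * R K else 0))) :
    pred = α / (α + N) *
        (1 - k * (∑' K : ℕ, if k ≤ K then p K / K * R K else 0) /
          (∑' K : ℕ, if k ≤ K then p K * R K else 0))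
    ∧ pred ≤ α / (α + N) := by
  have hRnewR : ∀ K : ℕ, Rnew K = R K * (((K : ℝ) - k) / K) := fun K => by
    rw [hRnew, hR]
    exact mfmCorrection_snoc_one hα.le Nj K
  have hΓNj : ∏ j, Real.Gamma (Nj j) ≠ 0 :=
    prod_ne_zero_iff.2 fun j _ => (Real.Gamma_pos_of_pos (by exact_mod_cast hNj j)).ne'
  have hT : 0 ≤ ∑' K : ℕ, if k ≤ K then p K / K * R K else 0 :=
    tsum_nonneg fun K => by
      split_ifs with hkK
      · exact mul_nonneg (div_nonneg (hp K) K.cast_nonneg)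
          ((hR K).symm ▸ mfmCorrection_nonneg hα.le Nj hkK)
      · exact le_rfl
  have hpred' : pred = α / (α + N) *
      (1 - k * (∑' K : ℕ, if k ≤ K then p K / K * R K else 0) /
        (∑' K : ℕ, if k ≤ K then p K * R K else 0)) := by
    rw [hpred]
    simp only [hRnewR]
    rw [mul_div_mul_comm, ewens_singleton_ratio k hα N.cast_nonneg hΓNj,
      tsum_ite_succ_le_mul_sub_div hk.ne' hs1 hs2, sub_div, div_self hpos.ne']
  refine ⟨hpred', hpred' ▸ mul_le_of_le_one_right (by positivity) ?_⟩
  exact sub_le_self _ (by positivity)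

/-- For a dynamic MFM with `γ_K = α/K`, the predictive probability that a new
observation creates a new cluster, defined as the EPPF ratio `p(C^new|N+1,α)/p(C|N,α)`,
equals `α/(α+N) · [1 - k (∑_{K≥k} p(K)/K · R_{N,k}^{K,α})/(∑_{K≥k} p(K) R_{N,k}^{K,α})]`,
and in particular is bounded above by `α/(α+N)`. -/
theorem dynamic_MFM_predictive (N k : ℕ) (hk : 0 < k) (α : ℝ) (hα : 0 < α)
    (Nj : Fin k → ℕ) (hNj : ∀ j, 0 < Nj j) (hsum : ∑ j, Nj j = N)
    (p : ℕ → ℝ) (hp : ∀ K, 0 ≤ p K) (hp0 : p 0 = 0) (hps : ∑' K : ℕ, p K = 1)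
    -- the correction factor `R_{N,k}^{K,α}` of the current partition
    (R : ℕ → ℝ)
    (hR : ∀ K, R K = ∏ j : Fin k,
        (Real.Gamma ((Nj j : ℝ) + α / K) * ((K : ℝ) - j)) /
          (Real.Gamma (1 + α / K) * Real.Gamma (Nj j) * K))
    -- the correction factor of the partition with the extra singleton cluster
    (Rnew : ℕ → ℝ)
    (hRnew : ∀ K, Rnew K = ∏ j : Fin (k + 1),
        (Real.Gamma (((Fin.snoc Nj 1 : Fin (k + 1) → ℕ) j : ℝ) + α / K) * ((K : ℝ) - j)) /
          (Real.Gamma (1 + α / K) * Real.Gamma ((Fin.snoc Nj 1 : Fin (k + 1) → ℕ) j) * K))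
    -- summability of the relevant series
    (hs1 : Summable fun K : ℕ => if k ≤ K then p K * R K else 0)
    (hs2 : Summable fun K : ℕ => if k ≤ K then p K / K * R K else 0)
    (hs3 : Summable fun K : ℕ => if k + 1 ≤ K then p K * Rnew K else 0)
    (hpos : 0 < ∑' K : ℕ, if k ≤ K then p K * R K else 0)
    -- the predictive probability, defined as the ratio `p(C^new|N+1,α)/p(C|N,α)` of EPPFs
    (pred : ℝ)
    (hpred : pred =
      ((α ^ (k + 1) * Real.Gamma α / Real.Gamma (α + (N + 1)) *
          ((∏ j, Real.Gamma (Nj j)) * Real.Gamma 1)) *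
        (∑' K : ℕ, if k + 1 ≤ K then p K * Rnew K else 0)) /
      ((α ^ k * Real.Gamma α / Real.Gamma (α + N) * ∏ j, Real.Gamma (Nj j)) *
        (∑' K : ℕ, if k ≤ K then p K * R K else 0))) :
    pred = α / (α + N) *
        (1 - k * (∑' K : ℕ, if k ≤ K then p K / K * R K else 0) /
          (∑' K : ℕ, if k ≤ K then p K * R K else 0))
    ∧ pred ≤ α / (α + N) :=
  dynamic_MFM_predictive_general N k hk α hα Nj hNj p hp R hR Rnew hRnew hs1 hs2 hpos pred hpred
end

section
/- A finite mixture with K components and symmetric Dirichlet(gamma) weight prior induces the same exchangeable partition probability function as the Pitman-Yor two-parameter family with reinforcement parameter sigma = -gamma and concentration parameter theta = K*gamma; i.e., Gamma(gamma K)/Gamma(gamma K + N) * K!/((K-K_+)!) * prod_{j=1}^{K_+} Gamma(N_j + gamma)/Gamma(gamma) = Gamma(theta)/Gamma(N + theta) * prod_{j=1}^{K_+} (theta + sigma(j-1)) * Gamma(N_j - sigma)/Gamma(1 - sigma) with sigma = -gamma, theta = K gamma. -/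
open Finset

/-- A finite mixture with `K` components and symmetric Dirichlet(γ) weights
induces the same EPPF as the Pitman–Yor family with `σ = -γ` and `θ = Kγ`. -/
theorem finite_mixture_pitman_yor_EPPF (K Kp N : ℕ) (hKp : 0 < Kp) (hK : Kp ≤ K)
    (γ : ℝ) (hγ : 0 < γ) (Nj : Fin Kp → ℕ) (hNj : ∀ j, 0 < Nj j) (hsum : ∑ j, Nj j = N)
    (σ θ : ℝ) (hσ : σ = -γ) (hθ : θ = K * γ) :
    Real.Gamma (γ * K) / Real.Gamma (γ * K + N) *
        ((Nat.factorial K : ℝ) / (Nat.factorial (K - Kp) : ℝ)) *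
        ∏ j, Real.Gamma ((Nj j : ℝ) + γ) / Real.Gamma γ
      = Real.Gamma θ / Real.Gamma ((N : ℝ) + θ) *
          ∏ j : Fin Kp,
            (θ + σ * (j : ℝ)) * (Real.Gamma ((Nj j : ℝ) - σ) / Real.Gamma (1 - σ)) := by
  subst hσ hθ
  have hΓγ : Real.Gamma γ ≠ 0 := (Real.Gamma_pos_of_pos hγ).ne'
  have h1mσ : Real.Gamma (1 - -γ) = γ * Real.Gamma γ := by
    rw [sub_neg_eq_add, add_comm]
    exact Real.Gamma_add_one hγ.ne'
  have hterm : ∀ j : Fin Kp,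
      ((K : ℝ) * γ + -γ * (j : ℝ)) *
        (Real.Gamma ((Nj j : ℝ) - -γ) / Real.Gamma (1 - -γ))
      = ((K - (j : ℕ) : ℕ) : ℝ) * (Real.Gamma ((Nj j : ℝ) + γ) / Real.Gamma γ) := by
    intro j
    have hjK : (j : ℕ) ≤ K := le_trans j.2.le hK
    rw [h1mσ, sub_neg_eq_add, Nat.cast_sub hjK]
    field_simp
    ring
  rw [Finset.prod_congr rfl (fun j _ => hterm j), Finset.prod_mul_distrib]
  have hdesc : ∏ j : Fin Kp, ((K - (j : ℕ) : ℕ) : ℝ)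
      = (Nat.factorial K : ℝ) / (Nat.factorial (K - Kp) : ℝ) := by
    rw [eq_div_iff (by exact_mod_cast (Nat.factorial_pos _).ne')]
    rw [← Nat.cast_prod, Fin.prod_univ_eq_prod_range (fun i => K - i),
      ← Nat.descFactorial_eq_prod_range, ← Nat.cast_mul, mul_comm,
      Nat.factorial_mul_descFactorial hK]
  rw [hdesc, mul_comm (K : ℝ) γ, add_comm ((N : ℝ))]
  ring
end
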